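/- arXiv:1710.08280 — 3 statements merged into one kernel-verified Lean document; each statement's English description precedes it below -/
import Mathlib

section
/- Let M, N, L be positive integers, and for each n ∈ {−L,…,L} let ℰ_n : ℤ → ℂ be a bounded M-periodic function. If Σ_{n=−L}^{L} ℰ_n(j) e^{2nNj − (nN)²} = 0 for every j ∈ ℤ, then ℰ_n(j) = 0 for all n ∈ {−L,…,L} and all j ∈ ℤ. -/
open Complex

/-- if bounded `M`-periodic functions `ℰ_n` satisfy
`Σ_{n=-L}^{L} ℰ_n(j) e^{2nNj-(nN)²} = 0` for all `j`, then all `ℰ_n` vanish. -/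
theorem stmt11 (M N L : ℕ) (hM : 0 < M) (hN : 0 < N) (hL : 0 < L)
    (E : ℤ → ℤ → ℂ)
    (hper : ∀ n : ℤ, ∀ j : ℤ, E n (j + (M : ℤ)) = E n j)
    (hbdd : ∀ n : ℤ, ∃ C : ℝ, ∀ j : ℤ, ‖E n j‖ ≤ C)
    (hsum : ∀ j : ℤ, ∑ n ∈ Finset.Icc (-(L : ℤ)) (L : ℤ),
        E n j * (Real.exp (2 * (n : ℝ) * (N : ℝ) * (j : ℝ) - ((n : ℝ) * (N : ℝ)) ^ 2) : ℂ)
      = 0) :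
    ∀ n ∈ Finset.Icc (-(L : ℤ)) (L : ℤ), ∀ j : ℤ, E n j = 0 := by
  intro n hn j
  set c : ℤ → ℂ := fun m =>
    E m j * (Real.exp (2 * (m : ℝ) * (N : ℝ) * (j : ℝ) - ((m : ℝ) * (N : ℝ)) ^ 2) : ℂ) with hc
  set p : Polynomial ℂ :=
    ∑ m ∈ Finset.Icc (-(L : ℤ)) (L : ℤ), Polynomial.C (c m) * Polynomial.X ^ (m + L).toNat
    with hp
  have hperN : ∀ m : ℤ, ∀ l : ℕ, E m (j + (l : ℤ) * M) = E m j := by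
    intro m l
    induction l with
    | zero => simp
    | succ k ih =>
        have h : (j + ((k : ℤ) + 1) * M) = (j + (k : ℤ) * M) + (M : ℤ) := by ring
        rw [show ((k + 1 : ℕ) : ℤ) = (k : ℤ) + 1 by push_cast; ring, h, hper, ih]
  have hroot : ∀ l : ℕ, p.IsRoot ((Real.exp (2 * N * M * l) : ℝ) : ℂ) := by
    intro l
    have hsum' := hsum (j + (l : ℤ) * M)
    unfold Polynomial.IsRoot
    rw [hp, Polynomial.eval_finset_sum]
    have key : ∀ m ∈ Finset.Icc (-(L : ℤ)) (L : ℤ),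
        (Polynomial.C (c m) * Polynomial.X ^ (m + L).toNat).eval
          ((Real.exp (2 * N * M * l) : ℝ) : ℂ)
        = (Real.exp (2 * N * M * l * L) : ℝ) *
          (E m (j + (l : ℤ) * M) *
            (Real.exp (2 * (m : ℝ) * (N : ℝ) * ((j + (l : ℤ) * M : ℤ) : ℝ)
              - ((m : ℝ) * (N : ℝ)) ^ 2) : ℂ)) := by
      intro m hm
      have hm' := Finset.mem_Icc.mp hm
      have h0 : (0 : ℤ) ≤ m + L := by linarith [hm'.1]
      have hkZ : (((m + L).toNat : ℤ) : ℝ) = (m : ℝ) + L := by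
        rw [Int.toNat_of_nonneg h0]; push_cast; ring
      have hk : (((m + L).toNat : ℕ) : ℝ) = (m : ℝ) + L := by exact_mod_cast hkZ
      have hpow : ((Real.exp (2 * N * M * l) : ℝ) : ℂ) ^ (m + L).toNat
          = ((Real.exp ((((m + L).toNat : ℕ) : ℝ) * (2 * N * M * l)) : ℝ) : ℂ) := by
        rw [Real.exp_nat_mul]
        push_cast
        ring
      rw [hperN m l, Polynomial.eval_mul, Polynomial.eval_C, Polynomial.eval_pow,
        Polynomial.eval_X]
      simp only [hc]
      rw [hpow, hk]
      have harg : Real.exp (2 * (m : ℝ) * (N : ℝ) * (j : ℝ) - ((m : ℝ) * (N : ℝ)) ^ 2)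
            * Real.exp (((m : ℝ) + L) * (2 * N * M * l))
          = Real.exp (2 * N * M * l * L)
            * Real.exp (2 * (m : ℝ) * (N : ℝ) * ((j + (l : ℤ) * M : ℤ) : ℝ)
                - ((m : ℝ) * (N : ℝ)) ^ 2) := by
        rw [← Real.exp_add, ← Real.exp_add]
        congr 1
        push_cast
        ring
      calc E m j * (Real.exp (2 * (m : ℝ) * (N : ℝ) * (j : ℝ) - ((m : ℝ) * (N : ℝ)) ^ 2) : ℂ)
              * ((Real.exp (((m : ℝ) + L) * (2 * N * M * l)) : ℝ) : ℂ)
          = E m j * ((Real.exp (2 * (m : ℝ) * (N : ℝ) * (j : ℝ) - ((m : ℝ) * (N : ℝ)) ^ 2)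
              * Real.exp (((m : ℝ) + L) * (2 * N * M * l)) : ℝ) : ℂ) := by
            push_cast; ring
        _ = E m j * ((Real.exp (2 * N * M * l * L)
              * Real.exp (2 * (m : ℝ) * (N : ℝ) * ((j + (l : ℤ) * M : ℤ) : ℝ)
                - ((m : ℝ) * (N : ℝ)) ^ 2) : ℝ) : ℂ) := by rw [harg]
        _ = ((Real.exp (2 * N * M * l * L) : ℝ) : ℂ) *
              (E m j * (Real.exp (2 * (m : ℝ) * (N : ℝ) * ((j + (l : ℤ) * M : ℤ) : ℝ)
                - ((m : ℝ) * (N : ℝ)) ^ 2) : ℂ)) := by push_cast; ring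
    rw [Finset.sum_congr rfl key, ← Finset.mul_sum, hsum', mul_zero]
  have hinj : Function.Injective (fun l : ℕ => ((Real.exp (2 * N * M * l) : ℝ) : ℂ)) := by
    intro a b hab
    simp only [Complex.ofReal_inj] at hab
    have h2 := Real.exp_injective hab
    have h3 : (2 * N * M * a : ℕ) = 2 * N * M * b := by exact_mod_cast h2
    exact Nat.eq_of_mul_eq_mul_left (by positivity) h3
  have hp0 : p = 0 := by
    apply p.eq_zero_of_infinite_isRoot
    apply Set.infinite_of_injective_forall_mem (f := fun l : ℕ =>
      ((Real.exp (2 * N * M * l) : ℝ) : ℂ)) hinj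
    intro l
    exact hroot l
  have hcoeff : p.coeff (n + L).toNat = c n := by
    rw [hp, Polynomial.finset_sum_coeff]
    rw [Finset.sum_eq_single n]
    · simp
    · intro m hm hmn
      have hm' := Finset.mem_Icc.mp hm
      have hn' := Finset.mem_Icc.mp hn
      have h0m : (0 : ℤ) ≤ m + L := by linarith [hm'.1]
      have h0n : (0 : ℤ) ≤ n + L := by linarith [hn'.1]
      have hne : (m + L).toNat ≠ (n + L).toNat := by
        intro h
        apply hmn
        have := congrArg (fun x : ℕ => (x : ℤ)) h
        simp only [Int.toNat_of_nonneg h0m, Int.toNat_of_nonneg h0n] at this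
        omega
      simp [Polynomial.coeff_C_mul, Polynomial.coeff_X_pow, hne,
        Ne.symm hne]
    · intro h
      exact absurd hn h
  have hcn : c n = 0 := by rw [← hcoeff, hp0, Polynomial.coeff_zero]
  rw [hc] at hcn
  simp only [mul_eq_zero] at hcn
  rcases hcn with h | h
  · exact h
  · exact absurd h (by exact_mod_cast Real.exp_ne_zero _)
end

section
/- Define g : ℤ → ℂ by g(j) = e^{−j²}. Then for all positive integers M and N, the Gabor system {E_{m/M}T_{nN}g : n ∈ ℤ, m ∈ {0,…,M−1}}, where (E_{m/M}T_{nN}g)(j) = e^{2πijm/M} e^{−(j−nN)²}, is linearly independent in ℓ²(ℤ). -/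
/-!
Up to the nonzero factor `e^{-(nN)²}` of each atom and the nowhere-vanishing factor `e^{-j²}`
common to all of them, the atom indexed by `(n, m)` is the geometric sequence `j ↦ z^j` with ratio
`z = (e^{2N})^n ζ^m`, `ζ = e^{2πi/M}`. These ratios are pairwise distinct (`|z|` determines `n`,
and then `ζ^m` determines `m`), and geometric sequences with distinct ratios are linearly
independent by Dedekind's independence of characters.
-/

open Complex Function

theorem linearIndependent_fun_pow_of_injective {ι K : Type*} [Field K] {z : ι → K}
    (hz : Injective z) : LinearIndependent K (fun i (k : ℕ) => z i ^ k) :=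
  (linearIndependent_monoidHom (Multiplicative ℕ) K).comp (fun i => powersHom K (z i))
    ((powersHom K).injective.comp hz)

theorem linearIndependent_fun_zpow_of_injective {ι K : Type*} [Field K] {z : ι → K}
    (hz : Injective z) : LinearIndependent K (fun i (j : ℤ) => z i ^ j) := by
  refine LinearIndependent.of_comp (LinearMap.funLeft K K ((↑) : ℕ → ℤ)) ?_
  convert linearIndependent_fun_pow_of_injective hz with i
  simp

theorem LinearIndependent.mul_mul_of_ne_zero {ι α K : Type*} [Field K] {v : ι → α → K}
    (hv : LinearIndependent K v) {a : ι → K} (ha : ∀ i, a i ≠ 0) {w : α → K}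
    (hw : ∀ x, w x ≠ 0) :
    LinearIndependent K (fun i x => a i * (w x * v i x)) := by
  have h : LinearIndependent K (fun i x => w x * v i x) :=
    hv.map' (LinearEquiv.piCongrRight fun x =>
      LinearEquiv.smulOfNeZero K K (w x) (hw x)).toLinearMap (LinearEquiv.ker _)
  exact h.units_smul fun i => Units.mk0 (a i) (ha i)

theorem injective_zpow_mul_pow {M : ℕ} {ρ ζ : ℂ} (hρ : 1 < ‖ρ‖)
    (hζ : IsPrimitiveRoot ζ M) :
    Injective fun p : ℤ × Fin M => ρ ^ p.1 * ζ ^ (p.2 : ℕ) := by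
  rintro ⟨n, m⟩ ⟨n', m'⟩ h
  have hM : M ≠ 0 := (Fin.pos m).ne'
  have hρ0 : ρ ≠ 0 := norm_pos_iff.1 (one_pos.trans hρ)
  have hn : n = n' := by
    have := congrArg norm h
    simp only [norm_mul, norm_zpow, norm_pow, hζ.norm'_eq_one hM, one_pow, mul_one] at this
    exact zpow_right_injective₀ (one_pos.trans hρ) hρ.ne' this
  subst hn
  have hm : ζ ^ (m : ℕ) = ζ ^ (m' : ℕ) := mul_left_cancel₀ (zpow_ne_zero _ hρ0) h
  simp [Fin.ext (hζ.pow_inj m.2 m'.2 hm)]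

theorem exp_mul_exp_neg_sub_sq_eq_mul_zpow (M N : ℕ) (n j : ℤ) (m : ℕ) :
    exp (2 * Real.pi * I * j * m / M) * (Real.exp (-((j : ℝ) - n * N) ^ 2) : ℂ) =
      Real.exp (-((n : ℝ) * N) ^ 2) *
        (Real.exp (-(j : ℝ) ^ 2) * (exp (2 * N) ^ n * exp (2 * Real.pi * I / M) ^ m) ^ j) := by
  push_cast
  simp only [← exp_nat_mul, ← exp_int_mul, ← exp_add]
  congr 1
  ring

/-- the Gabor system generated by the discrete Gaussian
`g(j) = e^{-j²}` is linearly independent for all `M, N ≥ 1`. -/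
theorem stmt12 (M N : ℕ) (hM : 0 < M) (hN : 0 < N) :
    LinearIndependent ℂ (fun p : ℤ × Fin M => fun j : ℤ =>
      Complex.exp (2 * Real.pi * Complex.I * (j : ℂ) * (p.2.1 : ℂ) / (M : ℂ)) *
        (Real.exp (-((j : ℝ) - (p.1 : ℝ) * (N : ℝ)) ^ 2) : ℂ)) := by
  have hρ : 1 < ‖exp (2 * N)‖ := by
    rw [norm_exp]
    exact Real.one_lt_exp_iff.2 (by simpa using hN)
  have hζ := isPrimitiveRoot_exp M hM.ne'
  have h : LinearIndependent ℂ fun (p : ℤ × Fin M) (j : ℤ) =>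
      (Real.exp (-((p.1 : ℝ) * N) ^ 2) : ℂ) *
        (Real.exp (-(j : ℝ) ^ 2) *
          (exp (2 * N) ^ p.1 * exp (2 * Real.pi * I / M) ^ (p.2 : ℕ)) ^ j) :=
    (linearIndependent_fun_zpow_of_injective (injective_zpow_mul_pow hρ hζ)).mul_mul_of_ne_zero
      (fun _ => by simp) (fun _ => by simp)
  simpa only [exp_mul_exp_neg_sub_sq_eq_mul_zpow] using h
end

section
/- Let M, N be positive integers with N < M. Then there exists g̃ ∈ ℓ²(ℤ) with infinite support such that the Gabor system {E_{m/M}T_{nN}g̃ : n ∈ ℤ, m ∈ {0,…,M−1}} is linearly dependent: concretely, g̃ = g + Σ_{ℓ=1}^{∞} (ε/2^ℓ) δ_{ℓM+1} with g the indicator of {1,…,N} and any ε > 0 admits nonzero scalars c_0,…,c_{M−1} with Σ_{m=0}^{M−1} c_m E_{m/M} g̃ = 0. -/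
open Complex Polynomial

/-- for `N < M` there is a window `g̃` with infinite support whose
Gabor system is linearly dependent; concretely `g̃ = 1_{1,…,N} + Σ_{ℓ≥1} (ε/2^ℓ) δ_{ℓM+1}`. -/
theorem stmt15 (M N : ℕ) (hN : 0 < N) (hNM : N < M) (ε : ℝ) (hε : 0 < ε)
    (gt : ℤ → ℂ)
    (hgt : ∀ j : ℤ, gt j =
      (if 1 ≤ j ∧ j ≤ (N : ℤ) then (1 : ℂ) else 0) +
        ∑' ℓ : ℕ, ((ε / 2 ^ (ℓ + 1) : ℝ) : ℂ) *
          (if j = ((ℓ : ℤ) + 1) * (M : ℤ) + 1 then (1 : ℂ) else 0)) :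
    (Function.support gt).Infinite ∧
    ∃ c : Fin M → ℂ, c ≠ 0 ∧ ∀ j : ℤ,
      ∑ m : Fin M,
        c m * (Complex.exp (2 * Real.pi * Complex.I * (j : ℂ) * (m.1 : ℂ) / (M : ℂ)) * gt j)
      = 0 := by
  have hM : 0 < M := lt_trans hN hNM
  have hMZ : ((M:ℤ)) ≠ 0 := by exact_mod_cast hM.ne'
  have hMC : ((M:ℂ)) ≠ 0 := by exact_mod_cast hM.ne'
  -- value at special points
  have hval : ∀ ℓ : ℕ, gt (((ℓ:ℤ)+1) * M + 1) = ((ε / 2 ^ (ℓ+1) : ℝ) : ℂ) := by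
    intro ℓ
    rw [hgt]
    have h1 : ¬ (1 ≤ ((ℓ:ℤ)+1) * M + 1 ∧ ((ℓ:ℤ)+1) * M + 1 ≤ (N : ℤ)) := by
      push_neg
      intro _
      have h2 : (1:ℤ) ≤ (ℓ:ℤ)+1 := by omega
      nlinarith [show (N:ℤ) < (M:ℤ) from by exact_mod_cast hNM]
    rw [if_neg h1, zero_add, tsum_eq_single ℓ]
    · simp
    · intro b hb
      rw [if_neg, mul_zero]
      intro h
      apply hb
      have := mul_right_cancel₀ hMZ (by linarith [h] : ((b:ℤ)+1) * M = ((ℓ:ℤ)+1) * M)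
      exact_mod_cast (by linarith : (b:ℤ) = ℓ)
  have hvne : ∀ ℓ : ℕ, gt (((ℓ:ℤ)+1) * M + 1) ≠ 0 := by
    intro ℓ
    rw [hval]
    exact_mod_cast (by positivity : ε / 2 ^ (ℓ+1) ≠ 0)
  constructor
  · apply Set.infinite_of_injective_forall_mem
      (f := fun ℓ : ℕ => ((ℓ:ℤ)+1) * M + 1)
    · intro a b h
      simp only at h
      have := mul_right_cancel₀ hMZ (by linarith [h] : ((a:ℤ)+1) * M = ((b:ℤ)+1) * M)
      exact_mod_cast (by linarith : (a:ℤ) = b)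
    · intro ℓ
      exact hvne ℓ
  -- the polynomial
  set p : ℂ[X] := ∏ k ∈ Finset.range N,
      (X - C (Complex.exp (2 * Real.pi * Complex.I * ((k:ℂ)+1) / M))) with hp
  have hmonic : p.Monic := monic_prod_of_monic _ _ fun k _ => monic_X_sub_C _
  have hdeg : p.natDegree = N := by
    rw [hp, natDegree_prod _ _ (fun k _ => X_sub_C_ne_zero _)]
    simp
  refine ⟨fun m => p.coeff m, ?_, ?_⟩
  · intro h
    have h1 := congrFun h ⟨N, hNM⟩
    simp only [Pi.zero_apply] at h1
    have h2 : p.coeff N = 1 := by rw [← hdeg]; exact hmonic.coeff_natDegree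
    exact absurd (h2.symm.trans h1) one_ne_zero
  · intro j
    set z := Complex.exp (2 * Real.pi * Complex.I * (j:ℂ) / M) with hz
    have hpow : ∀ m : Fin M,
        Complex.exp (2 * Real.pi * Complex.I * (j : ℂ) * (m.1 : ℂ) / (M : ℂ)) = z ^ (m:ℕ) := by
      intro m
      rw [hz, ← Complex.exp_nat_mul]
      congr 1
      field_simp
    have hsum : ∑ m : Fin M,
        p.coeff m * (Complex.exp (2 * Real.pi * Complex.I * (j : ℂ) * (m.1 : ℂ) / (M : ℂ)) * gt j)
        = p.eval z * gt j := by
      rw [eval_eq_sum_range' (lt_of_le_of_lt hdeg.le hNM), Finset.sum_mul,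
        ← Fin.sum_univ_eq_sum_range (fun i => p.coeff i * z ^ i * gt j)]
      exact Finset.sum_congr rfl fun m _ => by rw [hpow m]; ring
    rw [hsum]
    by_cases hgj : gt j = 0
    · rw [hgj, mul_zero]
    · -- j is in the support: two cases
      have hcase : (1 ≤ j ∧ j ≤ (N:ℤ)) ∨ ∃ ℓ : ℕ, j = ((ℓ:ℤ)+1) * M + 1 := by
        by_contra hc
        push_neg at hc
        apply hgj
        have hA : ¬(1 ≤ j ∧ j ≤ (N:ℤ)) := fun h => absurd h.2 (not_le.mpr (hc.1 h.1))
        rw [hgt j, if_neg hA, zero_add]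
        exact (tsum_congr fun ℓ => by rw [if_neg (hc.2 ℓ), mul_zero]).trans tsum_zero
      have hroot : p.eval z = 0 := by
        rw [hp, eval_prod]
        rcases hcase with ⟨hj1, hj2⟩ | ⟨ℓ, rfl⟩
        · apply Finset.prod_eq_zero (i := (j - 1).toNat)
          · simp only [Finset.mem_range]
            omega
          · simp only [eval_sub, eval_X, eval_C, sub_eq_zero, hz]
            congr 2
            have : (((j-1).toNat : ℤ) : ℂ) = (j:ℂ) - 1 := by
              rw [Int.toNat_of_nonneg (by omega)]; push_cast; ring
            push_cast at this ⊢
            rw [this]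
            ring
        · apply Finset.prod_eq_zero (i := 0) (Finset.mem_range.mpr hN)
          simp only [eval_sub, eval_X, eval_C, sub_eq_zero, hz]
          have harg : 2 * (Real.pi:ℂ) * Complex.I * ((((ℓ:ℤ)+1) * M + 1 : ℤ):ℂ) / M
              = 2 * (Real.pi:ℂ) * Complex.I * (((0:ℕ):ℂ)+1) / M
                + ((ℓ:ℕ)+1 : ℕ) * (2 * (Real.pi:ℂ) * Complex.I) := by
            push_cast
            field_simp
            ring
          rw [harg, Complex.exp_add, Complex.exp_nat_mul, Complex.exp_two_pi_mul_I,
            one_pow, mul_one]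
      rw [hroot, zero_mul]
end
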